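/- arXiv:2307.05427 — 2 statements merged into one kernel-verified Lean document; each statement's English description precedes it below -/
import Mathlib

section
/- Let g₁,…,g_s and f₁,…,f_m be polynomials in MvPolynomial (Fin n) ℂ, let x ∈ ℂⁿ, and let T ⊆ ℂⁿ be a ℂ-linear subspace with dim_ℂ T = k. Assume that the ℂ-linear span of the gradient vectors ∇g_j(x) := (∂g_j/∂x₁(x),…,∂g_j/∂xₙ(x)) for j = 1,…,s equals the annihilator {ξ ∈ ℂⁿ : Σᵢ ξᵢ vᵢ = 0 for all v ∈ T} of T with respect to the standard bilinear form. Let L : T → ℂᵐ be the linear map v ↦ (Σᵢ ∂f₁/∂xᵢ(x)·vᵢ, …, Σᵢ ∂f_m/∂xᵢ(x)·vᵢ). Then for every i with 0 ≤ i, the rank of L is at most i if and only if every ((n−k)+i+1) × ((n−k)+i+1) minor of the augmented n × (s+m) matrix A(x) := [M_G(x) | J_f(x)ᵀ] vanishes, where M_G(x) is the n × s matrix whose j-th column is ∇g_j(x) and J_f(x)ᵀ is the n × m matrix whose j-th column is ∇f_j(x). -/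
/-!
The columns of `[M_G | J_fᵀ]` span `W ⊔ U`, where `W = Tᗮ` for the dot product and `U` is
spanned by the `∇ f_j(x)`. Since `ker L = T ⊓ Uᗮ = (W ⊔ U)ᗮ`, rank–nullity gives
`rank L = dim (W ⊔ U) - (n - k)`; and a matrix has rank at most `r` iff all its
`(r + 1)`-minors vanish.
-/

open MvPolynomial Module Submodule

namespace Matrix

variable {K m n : Type*} [Field K]

theorem exists_linearIndependent_rows_of_le_rank [Fintype m] [Fintype n] (A : Matrix m n K)
    {r : ℕ} (h : r ≤ A.rank) :
    ∃ rows : Fin r → m, LinearIndependent K (A.submatrix rows id).row := by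
  obtain ⟨κ, a, -, hspan, hli⟩ := exists_linearIndependent' K A.row
  have : Fintype κ := have := hli.finite; .ofFinite κ
  have hcard : Fintype.card (Fin r) ≤ Fintype.card κ := by
    rwa [Fintype.card_fin, linearIndependent_iff_card_eq_finrank_span.mp hli, Set.finrank, hspan,
      ← rank_eq_finrank_span_row]
  obtain ⟨e⟩ := Function.Embedding.nonempty_of_card_le hcard
  exact ⟨a ∘ e, hli.comp e e.injective⟩

theorem rank_le_iff_forall_det_submatrix_eq_zero [Fintype m] [Fintype n] [DecidableEq m]
    [DecidableEq n] (A : Matrix m n K) (r : ℕ) :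
    A.rank ≤ r ↔ ∀ (rows : Fin (r + 1) → m) (cols : Fin (r + 1) → n),
      Function.Injective rows → Function.Injective cols → (A.submatrix rows cols).det = 0 := by
  refine ⟨fun h rows cols _ _ => by_contra fun hdet => ?_, fun h => not_lt.mp fun hlt => ?_⟩
  · have := rank_submatrix_le A rows cols
    rw [rank_of_det_ne_zero hdet, Fintype.card_fin] at this
    omega
  · obtain ⟨rows, hrows⟩ := A.exists_linearIndependent_rows_of_le_rank hlt
    set B := A.submatrix rows id
    have hrank : r + 1 ≤ Bᵀ.rank := by rw [rank_transpose, hrows.rank_matrix, Fintype.card_fin]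
    obtain ⟨cols, hcols⟩ := Bᵀ.exists_linearIndependent_rows_of_le_rank hrank
    have hunit : IsUnit (A.submatrix rows cols) := linearIndependent_cols_iff_isUnit.mp hcols
    exact ((isUnit_iff_isUnit_det _).mp hunit).ne_zero <|
      h rows cols (hrows.injective.of_comp (f := A.row)) (hcols.injective.of_comp (f := Bᵀ.row))

theorem span_range_col_fromCols {n₁ n₂ : Type*} (A₁ : Matrix m n₁ K) (A₂ : Matrix m n₂ K) :
    span K (Set.range (fromCols A₁ A₂).col) =
      span K (Set.range A₁.col) ⊔ span K (Set.range A₂.col) := by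
  have : (fromCols A₁ A₂).col = Sum.elim A₁.col A₂.col := by ext (j | j) i <;> rfl
  rw [this, Set.Sum.elim_range, span_union]

variable [Fintype n]

theorem dotProductBilin_isSymm :
    LinearMap.BilinForm.IsSymm (dotProductBilin K K : LinearMap.BilinForm K (n → K)) :=
  ⟨dotProduct_comm⟩

theorem dotProductBilin_nondegenerate :
    (dotProductBilin K K : LinearMap.BilinForm K (n → K)).Nondegenerate :=
  ⟨dotProduct_eq_zero, fun v hv => dotProduct_eq_zero v fun w => dotProduct_comm v w ▸ hv w⟩

theorem ker_mulVecLin_eq_orthogonal_span_row (M : Matrix m n K) :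
    LinearMap.ker M.mulVecLin =
      LinearMap.BilinForm.orthogonal (dotProductBilin K K) (span K (Set.range M.row)) := by
  ext v
  change M *ᵥ v = 0 ↔ span K (Set.range M.row) ≤ LinearMap.ker ((dotProductBilin K K).flip v)
  rw [span_le, Set.range_subset_iff, funext_iff]
  rfl

end Matrix

namespace LinearMap.BilinForm

theorem orthogonal_sup {R M : Type*} [CommSemiring R] [AddCommMonoid M] [Module R M]
    (B : LinearMap.BilinForm R M) (N L : Submodule R M) :
    B.orthogonal (N ⊔ L) = B.orthogonal N ⊓ B.orthogonal L := by
  refine le_antisymm (le_inf (orthogonal_le le_sup_left) (orthogonal_le le_sup_right)) ?_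
  rintro v ⟨hN, hL⟩ u hu
  obtain ⟨y, hy, z, hz, rfl⟩ := mem_sup.mp hu
  rw [map_add, LinearMap.add_apply, hN y hy, hL z hz, add_zero]

variable {K V W : Type*} [Field K] [AddCommGroup V] [Module K V] [FiniteDimensional K V]
  [AddCommGroup W] [Module K W] {B : LinearMap.BilinForm K V}

theorem finrank_range_comp_subtype_add_finrank (hB : B.Nondegenerate) (hB₀ : B.IsRefl)
    {φ : V →ₗ[K] W} {U : Submodule K V} (hφ : ker φ = B.orthogonal U) (T : Submodule K V) :
    finrank K (range (φ ∘ₗ T.subtype)) + finrank K V =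
      finrank K T + finrank K ↥(B.orthogonal T ⊔ U) := by
  have hinf : T ⊓ B.orthogonal U = B.orthogonal (B.orthogonal T ⊔ U) := by
    rw [orthogonal_sup, orthogonal_orthogonal hB hB₀]
  have hker : finrank K (ker (φ ∘ₗ T.subtype)) =
      finrank K V - finrank K ↥(B.orthogonal T ⊔ U) := by
    rw [ker_comp, ← finrank_map_subtype_eq, map_comap_subtype, hφ, hinf, finrank_orthogonal hB]
  have := finrank_range_add_finrank_ker (φ ∘ₗ T.subtype)
  have := Submodule.finrank_le (B.orthogonal T ⊔ U)
  omega

end LinearMap.BilinForm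

open Matrix

theorem rank_drop_iff_minors_vanish (n s m k : ℕ)
    (g : Fin s → MvPolynomial (Fin n) ℂ) (f : Fin m → MvPolynomial (Fin n) ℂ)
    (x : Fin n → ℂ) (T : Submodule ℂ (Fin n → ℂ))
    (hdim : Module.finrank ℂ T = k)
    -- the span of the gradients of the `g j` at `x` is the annihilator of `T`
    (hgrad : (Submodule.span ℂ
        (Set.range fun j : Fin s => fun i : Fin n => eval x (pderiv i (g j))) :
          Set (Fin n → ℂ)) =
        {ξ : Fin n → ℂ | ∀ v ∈ T, ∑ i, ξ i * v i = 0})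
    -- the `n × s` matrix whose `j`-th column is `∇ g j (x)`
    (MG : Matrix (Fin n) (Fin s) ℂ) (hMG : ∀ p j, MG p j = eval x (pderiv p (g j)))
    -- the `n × m` matrix whose `j`-th column is `∇ f j (x)`
    (JfT : Matrix (Fin n) (Fin m) ℂ) (hJfT : ∀ p j, JfT p j = eval x (pderiv p (f j)))
    -- the linear map `L : T → ℂᵐ`, `v ↦ (Σᵢ ∂fⱼ/∂xᵢ(x) • vᵢ)ⱼ`
    (L : T →ₗ[ℂ] (Fin m → ℂ))
    (hL : ∀ (v : T) (j : Fin m), L v j = ∑ i, eval x (pderiv i (f j)) * (v : Fin n → ℂ) i) :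
    ∀ i : ℕ,
      Module.finrank ℂ (LinearMap.range L) ≤ i ↔
        ∀ (rows : Fin ((n - k) + i + 1) → Fin n)
          (cols : Fin ((n - k) + i + 1) → (Fin s ⊕ Fin m)),
          Function.Injective rows → Function.Injective cols →
          ((Matrix.fromCols MG JfT).submatrix rows cols).det = 0 := by
  intro i
  let B : LinearMap.BilinForm ℂ (Fin n → ℂ) := dotProductBilin ℂ ℂ
  have hMG_col : span ℂ (Set.range MG.col) = B.orthogonal T := by
    have hcol : MG.col = fun j p => eval x (pderiv p (g j)) := by ext j p; exact hMG p j
    refine SetLike.coe_injective (hcol ▸ hgrad.trans ?_)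
    ext ξ
    exact forall₂_congr fun v _ => by
      change ξ ⬝ᵥ v = 0 ↔ v ⬝ᵥ ξ = 0
      rw [dotProduct_comm]
  have hL_eq : L = JfTᵀ.mulVecLin ∘ₗ T.subtype := by
    ext v j
    simp only [hL, LinearMap.comp_apply, mulVecLin_apply, mulVec_transpose, vecMul, dotProduct,
      hJfT, T.subtype_apply, mul_comm]
  have hrank :
      (fromCols MG JfT).rank = finrank ℂ ↥(B.orthogonal T ⊔ span ℂ (Set.range JfTᵀ.row)) := by
    rw [rank_eq_finrank_span_cols, span_range_col_fromCols, hMG_col, row_transpose]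
  have hsum := LinearMap.BilinForm.finrank_range_comp_subtype_add_finrank
    dotProductBilin_nondegenerate dotProductBilin_isSymm.isRefl
    (ker_mulVecLin_eq_orthogonal_span_row JfTᵀ) T
  rw [← hL_eq, hdim, ← hrank, finrank_fin_fun] at hsum
  have hk : k ≤ n := by simpa [hdim] using T.finrank_le
  rw [← rank_le_iff_forall_det_submatrix_eq_zero]
  omega
end

section
/- Let E be a finite-dimensional real inner product space, let M ⊆ M_* and N ⊆ N_* be subsets of E, and suppose that for every p ∈ M the tangent cones agree: tangentConeAt ℝ M p = tangentConeAt ℝ M_* p. If the pair (M_*, N_*) satisfies the sequential Whitney Condition (B) at a point q ∈ N, then the pair (M, N) satisfies the sequential Whitney Condition (B) at q. (This is the key step in the proof that a Whitney stratification of a full semialgebraic set B = X ∩ C is obtained by intersecting subordinate stratifications of X and X ∩ Y_C with the inequality locus C: a refinement of strata with unchanged tangent spaces inherits Condition (B).) -/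
open Filter Topology

/-- The sequential Whitney Condition (B) for a pair of subsets `(M, N)` at a point `q ∈ N`. -/
def SeqWhitneyB {E : Type*} [NormedAddCommGroup E] [NormedSpace ℝ E]
    (M N : Set E) (q : E) : Prop :=
  ∀ (p q' : ℕ → E), (∀ k, p k ∈ M) → (∀ k, q' k ∈ N) →
    Tendsto p atTop (𝓝 q) → Tendsto q' atTop (𝓝 q) →
    (∀ k, p k ≠ q' k) →
    ∀ u : E,
      Tendsto (fun k => ‖p k - q' k‖⁻¹ • (p k - q' k)) atTop (𝓝 u) →
      ∃ w : ℕ → E, (∀ k, w k ∈ tangentConeAt ℝ M (p k)) ∧ Tendsto w atTop (𝓝 u)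

theorem condition_B_of_refinement {E : Type*} [NormedAddCommGroup E]
    [InnerProductSpace ℝ E] [FiniteDimensional ℝ E]
    (M Mstar N Nstar : Set E) (hM : M ⊆ Mstar) (hN : N ⊆ Nstar)
    (htan : ∀ p ∈ M, tangentConeAt ℝ M p = tangentConeAt ℝ Mstar p)
    (q : E) (hq : q ∈ N)
    (hB : SeqWhitneyB Mstar Nstar q) :
    SeqWhitneyB M N q := by
  intro p q' hp hq' hpl hql hne u hu
  obtain ⟨w, hw, hwl⟩ := hB p q' (fun k => hM (hp k)) (fun k => hN (hq' k)) hpl hql hne u hu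
  exact ⟨w, fun k => (htan (p k) (hp k)) ▸ hw k, hwl⟩
end
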